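/- Let x be a sequence of length m with distinct elements, i ∈ {1,...,m-1}, and y = τ(x,i). Then SN_y[j] = SN_x[j] for every position j ∉ {i, i+1, ref_x(i), ref_x(i+1), ref_y(i), ref_y(i+1)}. -/

import Mathlib

/-- Binary tree shapes (Cartesian trees are determined by their shape). -/
inductive BTree : Type
  | nil : BTree
  | node : BTree → BTree → BTree
deriving DecidableEq

namespace BTree

/-- Number of nodes. -/
def size : BTree → ℕ
  | nil => 0
  | node l r => size l + size r + 1

/-- Length of the leftmost path. -/
def LMP : BTree → ℕ
  | nil => 0
  | node l _ => LMP l + 1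

/-- Length of the rightmost path. -/
def RMP : BTree → ℕ
  | nil => 0
  | node _ r => RMP r + 1

end BTree

/-- Minimum value of a list (0 for the empty list). -/
def listMin : List ℤ → ℤ
  | [] => 0
  | a :: t => t.foldl min a

/-- Index (0-based) of the minimum of a list. -/
def minIdx (l : List ℤ) : ℕ := l.idxOf (listMin l)

/-- Cartesian tree of a list, with fuel for termination. -/
def ctreeAux : ℕ → List ℤ → BTree
  | 0, _ => .nil
  | _ + 1, [] => .nil
  | n + 1, a :: t =>
      let g := minIdx (a :: t)
      .node (ctreeAux n ((a :: t).take g)) (ctreeAux n ((a :: t).drop (g + 1)))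

/-- Cartesian tree of a list: the root is the position of the minimum,
its subtrees are the Cartesian trees of the prefix and suffix around it. -/
def ctreeL (l : List ℤ) : BTree := ctreeAux l.length l

/-- The factor x[a..b] (1-based positions) of a sequence, as a list. -/
def seqList (x : ℕ → ℤ) (a b : ℕ) : List ℤ :=
  (List.range (b + 1 - a)).map (fun k => x (a + k))

/-- Cartesian tree of the sequence x[1..m]. -/
def ctreeOf (m : ℕ) (x : ℕ → ℤ) : BTree := ctreeL (seqList x 1 m)

/-- Positions j < h (1-based) with x[j] < x[h]. -/
def PDset (x : ℕ → ℤ) (h : ℕ) : Finset ℕ :=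
  (Finset.Ico 1 h).filter (fun j => x j < x h)

/-- Parent-distance table: PD_x[h] = h - max{j < h : x[j] < x[h]}, 0 if no such j. -/
def PD (x : ℕ → ℤ) (h : ℕ) : ℕ :=
  if hs : (PDset x h).Nonempty then h - (PDset x h).max' hs else 0

/-- Positions h < j ≤ m with x[j] < x[h]. -/
def RPDset (m : ℕ) (x : ℕ → ℤ) (h : ℕ) : Finset ℕ :=
  (Finset.Ioc h m).filter (fun j => x j < x h)

/-- Reverse parent-distance table: RPD_x[h] = min{j > h : x[j] < x[h]} - h, 0 if no such j. -/
def RPD (m : ℕ) (x : ℕ → ℤ) (h : ℕ) : ℕ :=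
  if hs : (RPDset m x h).Nonempty then (RPDset m x h).min' hs - h else 0

/-- Referent of h: the smallest position j > h with x[j] < x[h], or -1 if none. -/
def refD (m : ℕ) (x : ℕ → ℤ) (h : ℕ) : ℤ :=
  if hs : (RPDset m x h).Nonempty then ((RPDset m x h).min' hs : ℤ) else -1

/-- Skipped-number table: SN_x[h] is the number of nodes on the rightmost path of the
left subtree of node h in C(x), i.e. the number of positions whose referent is h. -/
def SN (m : ℕ) (x : ℕ → ℤ) (h : ℕ) : ℕ :=
  ((Finset.Ico 1 h).filter (fun j => refD m x j = (h : ℤ))).card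

/-- The swap τ(x,i): exchange the entries at positions i and i+1. -/
def swapAt (x : ℕ → ℤ) (i : ℕ) : ℕ → ℤ :=
  fun j => if j = i then x (i + 1) else if j = i + 1 then x i else x j

/-- ng(T,i): the Cartesian trees obtained from a sequence realizing T by one swap
at position i (valid positions are 1 ≤ i ≤ m-1). -/
def ngi (m : ℕ) (T : BTree) (i : ℕ) : Set BTree :=
  { S | 1 ≤ i ∧ i + 1 ≤ m ∧ ∃ x : ℕ → ℤ, Set.InjOn x (Set.Icc 1 m) ∧
        ctreeOf m x = T ∧ S = ctreeOf m (swapAt x i) }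

/-- ng(T): the swap neighbourhood of T. -/
def ng (m : ℕ) (T : BTree) : Set BTree := ⋃ i, ngi m T i

/-- Number of permutations of {1,...,n} whose Cartesian tree is A. -/
noncomputable def permCount (n : ℕ) (A : BTree) : ℕ :=
  Set.ncard { σ : Equiv.Perm (Fin n) |
    ctreeL (List.ofFn (fun k : Fin n => ((σ k : ℕ) : ℤ) + 1)) = A }

/-- Product over all nodes t of A of the size of the subtree rooted at t. -/
def hookProd : BTree → ℕ
  | .nil => 1
  | .node l r => (BTree.node l r).size * hookProd l * hookProd r

/-! For `k, j ∉ {i, i+1}` the referent condition `ref k = j` only looks at `x k`, `x j` and the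
values strictly between `k` and `j`; that open interval contains `i` iff it contains `i+1`, so the
swap merely permutes those values. Hence, apart from `i` and `i+1`, the positions with referent
`j` are the same in `x` and `τ(x,i)`. -/

lemma refD_eq_natCast_iff {m : ℕ} {x : ℕ → ℤ} {k j : ℕ} :
    refD m x k = j ↔ j ∈ RPDset m x k ∧ ∀ l ∈ Finset.Ioo k j, x k ≤ x l := by
  unfold refD
  split_ifs with hne
  · rw [Nat.cast_inj, Finset.min'_eq_iff]
    refine and_congr_right fun hj => ?_
    simp only [RPDset, Finset.mem_filter, Finset.mem_Ioc, Finset.mem_Ioo] at hj ⊢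
    constructor
    · intro hmin l ⟨hkl, hlj⟩
      by_contra! hlt
      have := hmin l ⟨⟨hkl, by omega⟩, hlt⟩
      omega
    · intro hbetween b ⟨⟨hkb, _⟩, hlt⟩
      by_contra! hbj
      exact absurd (hbetween b ⟨hkb, hbj⟩) (not_le.mpr hlt)
  · simp [Finset.not_nonempty_iff_eq_empty.mp hne]

lemma swapAt_apply_of_ne {x : ℕ → ℤ} {i l : ℕ} (hi : l ≠ i) (hi' : l ≠ i + 1) :
    swapAt x i l = x l := by
  simp [swapAt, hi, hi']

lemma forall_swapAt_iff {x : ℕ → ℤ} {i : ℕ} {s : Finset ℕ} (hs : i ∈ s ↔ i + 1 ∈ s)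
    (P : ℤ → Prop) : (∀ l ∈ s, P (swapAt x i l)) ↔ ∀ l ∈ s, P (x l) := by
  constructor <;> intro h l hl <;>
  · rcases eq_or_ne l i with rfl | hi
    · simpa [swapAt] using h (l + 1) (hs.1 hl)
    rcases eq_or_ne l (i + 1) with rfl | hi'
    · simpa [swapAt] using h i (hs.2 hl)
    simpa [swapAt_apply_of_ne hi hi'] using h l hl

lemma refD_swapAt_eq_natCast_iff {m i k j : ℕ} {x : ℕ → ℤ} (hk : k ≠ i) (hk' : k ≠ i + 1)
    (hj : j ≠ i) (hj' : j ≠ i + 1) :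
    refD m (swapAt x i) k = j ↔ refD m x k = j := by
  have hs : i ∈ Finset.Ioo k j ↔ i + 1 ∈ Finset.Ioo k j := by simp only [Finset.mem_Ioo]; omega
  simp only [refD_eq_natCast_iff, RPDset, Finset.mem_filter, swapAt_apply_of_ne hk hk',
    swapAt_apply_of_ne hj hj', forall_swapAt_iff hs (x k ≤ ·)]

theorem stmt15_general (m i : ℕ) (x : ℕ → ℤ) :
    ∀ j ∈ Finset.Icc 1 m, j ≠ i → j ≠ i + 1 →
      (j : ℤ) ≠ refD m x i → (j : ℤ) ≠ refD m x (i + 1) →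
      (j : ℤ) ≠ refD m (swapAt x i) i → (j : ℤ) ≠ refD m (swapAt x i) (i + 1) →
      SN m (swapAt x i) j = SN m x j := by
  intro j _ hj hj' hx hx' hy hy'
  unfold SN
  congr 1
  refine Finset.filter_congr fun k _ => ?_
  rcases eq_or_ne k i with rfl | hk
  · exact iff_of_false (Ne.symm hy) (Ne.symm hx)
  rcases eq_or_ne k (i + 1) with rfl | hk'
  · exact iff_of_false (Ne.symm hy') (Ne.symm hx')
  exact refD_swapAt_eq_natCast_iff hk hk' hj hj'

theorem stmt15 (m i : ℕ) (x : ℕ → ℤ) (hx : Set.InjOn x (Set.Icc 1 m))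
    (hi1 : 1 ≤ i) (him : i + 1 ≤ m) :
    ∀ j ∈ Finset.Icc 1 m, j ≠ i → j ≠ i + 1 →
      (j : ℤ) ≠ refD m x i → (j : ℤ) ≠ refD m x (i + 1) →
      (j : ℤ) ≠ refD m (swapAt x i) i → (j : ℤ) ≠ refD m (swapAt x i) (i + 1) →
      SN m (swapAt x i) j = SN m x j :=
  stmt15_general m i x
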